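/- If S is a set of n points in convex position in general position (n ≥ 2), then S admits ⌊n/2⌋ pairwise edge-disjoint plane straight-line spanning paths. -/

import Mathlib

/-- Points in the plane. -/
abbrev Pt := ℝ × ℝ

/-- No three distinct points of `S` are collinear. -/
def GenPos (S : Set Pt) : Prop :=
  ∀ a ∈ S, ∀ b ∈ S, ∀ c ∈ S, a ≠ b → a ≠ c → b ≠ c →
    ¬ Collinear ℝ ({a, b, c} : Set Pt)

/-- A point `p` outside the hull sees `q ∈ S` if the segment `pq` meets
the convex hull of `S` exactly in `{q}`. -/
def Sees (p q : Pt) (S : Set Pt) : Prop :=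
  segment ℝ p q ∩ convexHull ℝ S = {q}

/-- The set of points of `S` seen from `p`. -/
def SeenSet (p : Pt) (S : Set Pt) : Set Pt := {q ∈ S | Sees p q S}

/-- `x` is an extreme point of `S`. -/
def ExtremePt (S : Set Pt) (x : Pt) : Prop := x ∈ S ∧ x ∉ convexHull ℝ (S \ {x})

/-- `ab` is an edge of the boundary of the convex hull of `S`. -/
def HullEdge (S : Set Pt) (a b : Pt) : Prop :=
  a ∈ S ∧ b ∈ S ∧ a ≠ b ∧ segment ℝ a b ⊆ frontier (convexHull ℝ S)

/-- A list enumerating the extreme points of `S` in cyclic convex-position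
order along the boundary of the convex hull. -/
def HullCycle (S : Set Pt) (l : List Pt) : Prop :=
  l.Nodup ∧ {x | x ∈ l} = {x | ExtremePt S x} ∧
    ∀ i < l.length, HullEdge S l[i]! l[(i + 1) % l.length]!

/-- A contiguous arc along the boundary of the hull of `S`
beginning in `a` and ending in `c`. -/
def Arc (S : Set Pt) (a c : Pt) (A : List Pt) : Prop :=
  ∃ l, HullCycle S l ∧ ∃ k ≤ l.length,
    A = l.take k ∧ A.head? = some a ∧ A.getLast? = some c

/-- The (undirected) edges of the path given by the list `l`. -/
def edgeSet (l : List Pt) : Set (Set Pt) :=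
  {e | ∃ p ∈ l.zip l.tail, e = ({p.1, p.2} : Set Pt)}

/-- The straight-line drawing of the path `l` is crossing-free: two edges meet
only in common endpoints. -/
def PlaneList (l : List Pt) : Prop :=
  ∀ i j : ℕ, i < j → j + 1 < l.length →
    segment ℝ l[i]! l[i + 1]! ∩ segment ℝ l[j]! l[j + 1]! ⊆
      ({l[i]!, l[i + 1]!} ∩ {l[j]!, l[j + 1]!} : Set Pt)

/-- `l` visits every point of `S` exactly once. -/
def IsSpanningPath (S : Set Pt) (l : List Pt) : Prop :=
  l.Nodup ∧ {x | x ∈ l} = S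

/-- A crossing-free straight-line spanning path of `S`. -/
def PlaneSpanningPath (S : Set Pt) (l : List Pt) : Prop :=
  IsSpanningPath S l ∧ PlaneList l

/-- Two paths are edge-disjoint if no segment is an edge of both. -/
def EdgeDisjoint (P Q : List Pt) : Prop := ∀ e ∈ edgeSet P, e ∉ edgeSet Q

/-- `S` admits three pairwise edge-disjoint plane spanning paths. -/
def ThreePaths (S : Set Pt) : Prop :=
  ∃ P Q R : List Pt,
    PlaneSpanningPath S P ∧ PlaneSpanningPath S Q ∧ PlaneSpanningPath S R ∧
    EdgeDisjoint P Q ∧ EdgeDisjoint P R ∧ EdgeDisjoint Q R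

/-- `(S₁, S₂)` is a balanced separated partition of `S`. -/
def BSP (S S₁ S₂ : Finset Pt) : Prop :=
  S₁ ∪ S₂ = S ∧ Disjoint S₁ S₂ ∧
  (S₁.card : ℤ) - S₂.card ≤ 1 ∧ (S₂.card : ℤ) - S₁.card ≤ 1 ∧
  Disjoint (convexHull ℝ (S₁ : Set Pt)) (convexHull ℝ (S₂ : Set Pt))

/-- `ab` is an edge of the visibility graph `V(S₁,S₂)`. -/
def VisEdge (S₁ S₂ : Finset Pt) (a b : Pt) : Prop :=
  a ∈ S₁ ∧ b ∈ S₂ ∧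
  segment ℝ a b ∩ (convexHull ℝ (S₁ : Set Pt) ∪ convexHull ℝ (S₂ : Set Pt))
    = ({a, b} : Set Pt)

/-- Two segments cross: their open segments share a point. -/
def SegCross (a b c d : Pt) : Prop :=
  (openSegment ℝ a b ∩ openSegment ℝ c d).Nonempty

/-- Consecutive vertices of `l` alternate between `S₁` and `S₂`. -/
def Alternating (S₁ S₂ : Finset Pt) (l : List Pt) : Prop :=
  ∀ i, i + 1 < l.length →
    (l[i]! ∈ S₁ ∧ l[i + 1]! ∈ S₂) ∨ (l[i]! ∈ S₂ ∧ l[i + 1]! ∈ S₁)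

/-- A zig-zag path for the balanced separated partition `(S₁,S₂)` of `S`. -/
def ZigZag (S S₁ S₂ : Finset Pt) (l : List Pt) : Prop :=
  PlaneSpanningPath (S : Set Pt) l ∧ Alternating S₁ S₂ l

/-- Twice the signed area of the triangle `a b c`; positive iff `c` lies to the
left of the directed line `ab`. -/
def ccw (a b c : Pt) : ℝ :=
  (b.1 - a.1) * (c.2 - a.2) - (b.2 - a.2) * (c.1 - a.1)

/-- `uv` is a halving segment of `S`: the line through `u` and `v` has exactly
`(|S| - 2)/2` points of `S` strictly on each side. -/
def Halving (S : Finset Pt) (u v : Pt) : Prop :=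
  u ∈ S ∧ v ∈ S ∧ u ≠ v ∧
  2 * ((S : Set Pt) ∩ {s | 0 < ccw u v s}).ncard = S.card - 2 ∧
  2 * ((S : Set Pt) ∩ {s | ccw u v s < 0}).ncard = S.card - 2

/-- The wheel configuration: all points but one in convex position, and one
interior point `y` such that every line through `y` and another point of the
configuration halves the remaining points. -/
def IsWheel (S : Finset Pt) : Prop :=
  ∃ y ∈ S,
    (∀ x ∈ S.erase y, x ∉ convexHull ℝ (((S.erase y : Finset Pt) : Set Pt) \ {x})) ∧
    y ∈ interior (convexHull ℝ ((S.erase y : Finset Pt) : Set Pt)) ∧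
    ∀ x ∈ S.erase y, Halving S y x

/-- `v` is a switchable path for the balanced separated partition `(S₁,S₂)` of
`S`: its edges are visibility edges, they cross a separating line of the
partition in order along the line, and every open triangle spanned by three
consecutive vertices contains no point of `S`. -/
def Switchable (S S₁ S₂ : Finset Pt) (v : List Pt) : Prop :=
  2 ≤ v.length ∧
  (∀ i, i + 1 < v.length →
    VisEdge S₁ S₂ v[i]! v[i + 1]! ∨ VisEdge S₁ S₂ v[i + 1]! v[i]!) ∧
  (∃ (f : Pt →ₗ[ℝ] ℝ) (c : ℝ),
    (∀ x ∈ S₁, f x < c) ∧ (∀ x ∈ S₂, c < f x) ∧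
    ∃ x : ℕ → Pt,
      (∀ i, i + 1 < v.length → x i ∈ segment ℝ v[i]! v[i + 1]! ∧ f (x i) = c) ∧
      ∃ g : Pt →ₗ[ℝ] ℝ, ∀ i j, i < j → j + 1 < v.length → g (x i) < g (x j)) ∧
  ∀ i, i + 2 < v.length →
    ∀ s ∈ S, s ∉ interior (convexHull ℝ ({v[i]!, v[i + 1]!, v[i + 2]!} : Set Pt))

/-- `u` is a bridged vertex of the partition `(S₁,S₂)` of `S`: an endpoint of an
edge of the boundary of `conv S` with one endpoint in each class. -/
def Bridged (S S₁ S₂ : Finset Pt) (u : Pt) : Prop :=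
  ∃ w, HullEdge (S : Set Pt) u w ∧
    ((u ∈ S₁ ∧ w ∈ S₂) ∨ (u ∈ S₂ ∧ w ∈ S₁))

/-- `u` is incident with at least two edges of the visibility graph. -/
def IncidentVisEdges2 (S₁ S₂ : Finset Pt) (u : Pt) : Prop :=
  ∃ w₁ w₂, w₁ ≠ w₂ ∧
    (VisEdge S₁ S₂ u w₁ ∨ VisEdge S₁ S₂ w₁ u) ∧
    (VisEdge S₁ S₂ u w₂ ∨ VisEdge S₁ S₂ w₂ u)

/-!
List the points counterclockwise around their hull as `p₀, …, pₙ₋₁`: sorting by slope around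
the lexicographically smallest point does it, and convex position makes every triple
`pᵢ pⱼ pₖ` with `i < j < k` a left turn. With `m = ⌊(n - 1)/2⌋`, the `r`-th path zig-zags
through the positions `r + m, r + m + 1, r + m - 1, r + m + 2, …` modulo `n`. All vertices
after an edge lie strictly on one side of its line, so the path is plane; and every edge joins
two positions whose sum is `2 (r + m)` or `2 (r + m) + 1` modulo `n`, classes that are disjoint
for distinct `r < ⌊n/2⌋`, so the paths are edge-disjoint.
-/

lemma ccw_cyclic (a b c : Pt) : ccw a b c = ccw b c a := by unfold ccw; ring

lemma ccw_swap (a b c : Pt) : ccw b a c = -ccw a b c := by unfold ccw; ring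

lemma ccw_smul_add_smul (a b x y : Pt) {u v : ℝ} (huv : u + v = 1) :
    ccw a b (u • x + v • y) = u * ccw a b x + v * ccw a b y := by
  obtain rfl : v = 1 - u := by linarith
  simp only [ccw, Prod.fst_add, Prod.snd_add, Prod.smul_fst, Prod.smul_snd, smul_eq_mul]
  ring

lemma ne_of_ccw_ne_zero {a b c : Pt} (h : ccw a b c ≠ 0) : a ≠ b ∧ a ≠ c ∧ b ≠ c := by
  refine ⟨?_, ?_, ?_⟩ <;> rintro rfl <;> exact h (by unfold ccw; ring)

lemma ccw_eq_zero_of_mem_segment {a b z : Pt} (hz : z ∈ segment ℝ a b) : ccw a b z = 0 := by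
  obtain ⟨u, v, -, -, huv, rfl⟩ := hz
  rw [ccw_smul_add_smul a b a b huv]
  unfold ccw
  ring

lemma convex_setOf_ccw_pos (a b : Pt) : Convex ℝ {z | 0 < ccw a b z} := by
  refine convex_iff_forall_pos.2 fun x hx y hy u v hu hv huv => ?_
  rw [Set.mem_ofPred_eq, ccw_smul_add_smul a b x y huv]
  exact add_pos (mul_pos hu hx) (mul_pos hv hy)

lemma disjoint_segment_of_ccw_pos {a b x y : Pt} (hx : 0 < ccw a b x) (hy : 0 < ccw a b y) :
    Disjoint (segment ℝ a b) (segment ℝ x y) :=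
  Set.disjoint_left.2 fun _ hab hxy =>
    ((convex_setOf_ccw_pos a b).segment_subset hx hy hxy).ne' (ccw_eq_zero_of_mem_segment hab)

lemma eq_of_mem_segment_of_mem_segment {x y z p : Pt} (h : ccw x y z ≠ 0)
    (hxy : p ∈ segment ℝ x y) (hyz : p ∈ segment ℝ y z) : p = y := by
  obtain ⟨u, v, -, -, huv, rfl⟩ := hyz
  have hp := ccw_eq_zero_of_mem_segment hxy
  rw [ccw_smul_add_smul x y y z huv, ccw_eq_zero_of_mem_segment (right_mem_segment ℝ x y)] at hp
  obtain rfl : v = 0 := by simpa [h] using hp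
  simp [show u = 1 by linarith]

lemma collinear_of_ccw_eq_zero {a b c : Pt} (h : ccw a b c = 0) :
    Collinear ℝ ({a, b, c} : Set Pt) := by
  rcases eq_or_ne a b with rfl | hab
  · simpa using collinear_pair ℝ a c
  have hd : (b.1 - a.1) ^ 2 + (b.2 - a.2) ^ 2 ≠ 0 := by
    intro h0
    exact hab (Prod.ext (by nlinarith) (by nlinarith))
  set t := ((c.1 - a.1) * (b.1 - a.1) + (c.2 - a.2) * (b.2 - a.2)) /
    ((b.1 - a.1) ^ 2 + (b.2 - a.2) ^ 2)
  rw [collinear_iff_of_mem (Set.mem_insert a _)]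
  refine ⟨b - a, ?_⟩
  rintro p (rfl | rfl | rfl)
  · exact ⟨0, by simp⟩
  · exact ⟨1, by simp⟩
  · refine ⟨t, Prod.ext ?_ ?_⟩ <;> simp only [vadd_eq_add, Prod.fst_add, Prod.snd_add,
      Prod.smul_fst, Prod.smul_snd, Prod.fst_sub, Prod.snd_sub, smul_eq_mul, t] <;>
      field_simp <;> unfold ccw at h
    · linear_combination (a.2 - b.2) * h
    · linear_combination (b.1 - a.1) * h

lemma GenPos.ccw_ne_zero {S : Set Pt} (hS : GenPos S) {a b c : Pt} (ha : a ∈ S) (hb : b ∈ S)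
    (hc : c ∈ S) (hab : a ≠ b) (hac : a ≠ c) (hbc : b ≠ c) : ccw a b c ≠ 0 :=
  fun h => hS a ha b hb c hc hab hac hbc (collinear_of_ccw_eq_zero h)

lemma mem_convexHull_of_ccw_pos {a b c x : Pt} (ha : 0 < ccw b c x) (hb : 0 < ccw c a x)
    (hc : 0 < ccw a b x) : x ∈ convexHull ℝ ({a, b, c} : Set Pt) := by
  have hx : x = Finset.univ.centerMass ![ccw b c x, ccw c a x, ccw a b x] ![a, b, c] := by
    have hD : ccw b c x + ccw c a x + ccw a b x ≠ 0 := by positivity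
    simp only [Finset.centerMass, Fin.sum_univ_three, Matrix.cons_val_zero, Matrix.cons_val_one,
      Matrix.cons_val_two, Matrix.tail_cons, Matrix.head_cons]
    refine Prod.ext ?_ ?_ <;>
      simp only [Prod.smul_fst, Prod.smul_snd, Prod.fst_add, Prod.snd_add, smul_eq_mul] <;>
      field_simp <;> unfold ccw <;> ring
  rw [hx]
  refine Finset.centerMass_mem_convexHull _ (fun i _ => ?_) ?_ (fun i _ => ?_)
  · fin_cases i <;> simp [ha.le, hb.le, hc.le]
  · simp only [Fin.sum_univ_three, Matrix.cons_val_zero, Matrix.cons_val_one,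
      Matrix.cons_val_two, Matrix.tail_cons, Matrix.head_cons]
    positivity
  · fin_cases i <;> simp

lemma ccw_pos_of_notMem_convexHull {p a b c : Pt} (hab : 0 < ccw p a b) (hbc : 0 < ccw p b c)
    (hb : b ∉ convexHull ℝ ({p, a, c} : Set Pt)) (habc : ccw a b c ≠ 0) : 0 < ccw a b c := by
  refine habc.lt_or_gt.resolve_left fun hneg => hb (mem_convexHull_of_ccw_pos ?_ ?_ hab)
  · linarith [ccw_cyclic a c b, ccw_swap b c a, ccw_cyclic a b c]
  · rwa [ccw_cyclic]

lemma List.Pairwise.rel_getElem! {α : Type*} [Inhabited α] {R : α → α → Prop} {l : List α}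
    (h : l.Pairwise R) {i j : ℕ} (hij : i < j) (hj : j < l.length) : R l[i]! l[j]! := by
  rw [getElem!_pos l i (hij.trans hj), getElem!_pos l j hj]
  exact List.pairwise_iff_getElem.1 h i j _ hj hij

lemma List.Nodup.getElem!_inj {α : Type*} [Inhabited α] {l : List α} (hl : l.Nodup) {i j : ℕ}
    (hi : i < l.length) (hj : j < l.length) (h : l[i]! = l[j]!) : i = j := by
  rw [getElem!_pos l i hi, getElem!_pos l j hj] at h
  exact hl.getElem_inj_iff.1 h

def CcwOrdered (l : List Pt) : Prop :=
  ∀ i j k, i < j → j < k → k < l.length → 0 < ccw l[i]! l[j]! l[k]!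

namespace CcwOrdered

variable {l : List Pt}

lemma ccw_pos_of_lt_or_lt (hl : CcwOrdered l) {a b c : ℕ} (hab : a < b) (hb : b < l.length)
    (hc : c < l.length) (hc' : c < a ∨ b < c) : 0 < ccw l[a]! l[b]! l[c]! := by
  rcases hc' with hca | hbc
  · rw [ccw_cyclic, ccw_cyclic]
    exact hl c a b hca hab hb
  · exact hl a b c hab hbc hc

lemma append_singleton {a : Pt} (hl : CcwOrdered (a :: l)) : CcwOrdered (l ++ [a]) := by
  have hget : ∀ i < l.length, (l ++ [a])[i]! = l[i]! := fun i hi => by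
    rw [getElem!_pos _ i (by simp; omega), getElem!_pos l i hi, List.getElem_append_left]
  intro i j k hij hjk hk
  simp only [List.length_append, List.length_singleton] at hk
  rw [hget i (by omega), hget j (by omega)]
  rcases (Nat.lt_succ_iff.1 hk).lt_or_eq with hk | rfl
  · rw [hget k hk]
    simpa using hl (i + 1) (j + 1) (k + 1) (by omega) (by omega) (by simpa using hk)
  · rw [show (l ++ [a])[l.length]! = a by simp, ← ccw_cyclic]
    simpa using hl 0 (i + 1) (j + 1) (by omega) (by omega) (by simp; omega)

lemma rotate (hl : CcwOrdered l) (c : ℕ) : CcwOrdered (l.rotate c) := by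
  induction c generalizing l with
  | zero => simpa
  | succ c ih =>
    cases l with
    | nil => simpa
    | cons a l =>
      rw [List.rotate_cons_succ]
      exact ih hl.append_singleton

lemma cons {p : Pt} (hl : CcwOrdered l) (hp : l.Pairwise fun a b => 0 < ccw p a b) :
    CcwOrdered (p :: l) := by
  intro i j k hij hjk hk
  simp only [List.length_cons] at hk
  obtain ⟨j, rfl⟩ := Nat.exists_eq_add_of_lt (show 0 < j by omega)
  obtain ⟨k, rfl⟩ := Nat.exists_eq_add_of_lt (show 0 < k by omega)
  simp only [zero_add, List.getElem!_cons_succ]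
  rcases i with _ | i
  · simpa using hp.rel_getElem! (show j < k by omega) (by omega)
  · simpa using hl i j k (by omega) (by omega) (by omega)

end CcwOrdered

lemma ccwOrdered_cons_of_convexPosition {S : Set Pt} (hgp : GenPos S)
    (hconv : ∀ x ∈ S, x ∉ convexHull ℝ (S \ {x})) {p : Pt} (hp : p ∈ S) {l : List Pt}
    (hlS : ∀ x ∈ l, x ∈ S) (hl : l.Pairwise fun a b => 0 < ccw p a b) : CcwOrdered (p :: l) := by
  refine CcwOrdered.cons (fun i j k hij hjk hk => ?_) hl
  have hmem : ∀ i < l.length, l[i]! ∈ S := fun i hi => hlS _ (getElem!_pos l i hi ▸ l.getElem_mem hi)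
  have hab := hl.rel_getElem! hij (hjk.trans hk)
  have hbc := hl.rel_getElem! hjk hk
  obtain ⟨-, hpb, hab'⟩ := ne_of_ccw_ne_zero hab.ne'
  obtain ⟨-, -, hbc'⟩ := ne_of_ccw_ne_zero hbc.ne'
  obtain ⟨-, -, hac'⟩ := ne_of_ccw_ne_zero (hl.rel_getElem! (hij.trans hjk) hk).ne'
  have hsub : ({p, l[i]!, l[k]!} : Set Pt) ⊆ S \ {l[j]!} := by
    rintro x (rfl | rfl | rfl)
    exacts [⟨hp, hpb⟩, ⟨hmem i (by omega), hab'⟩, ⟨hmem k hk, hbc'.symm⟩]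
  exact ccw_pos_of_notMem_convexHull hab hbc
    (fun hb => hconv _ (hmem j (by omega)) (convexHull_mono hsub hb))
    (hgp.ccw_ne_zero (hmem i (by omega)) (hmem j (by omega)) (hmem k hk) hab' hac' hbc')

noncomputable def slopeFrom (p q : Pt) : WithTop ℝ :=
  if q.1 = p.1 then ⊤ else ↑((q.2 - p.2) / (q.1 - p.1))

lemma ccw_nonneg_of_slopeFrom_le {p q q' : Pt} (hq : toLex p < toLex q)
    (hq' : toLex p < toLex q') (h : slopeFrom p q ≤ slopeFrom p q') : 0 ≤ ccw p q q' := by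
  rw [Prod.Lex.toLex_lt_toLex] at hq hq'
  unfold slopeFrom at h
  unfold ccw
  split_ifs at h with hv hv' hv'
  · rw [hv, hv']; simp
  · simp at h
  · rw [hv']
    have : p.1 < q.1 := by grind
    have : p.2 < q'.2 := by grind
    nlinarith
  · have hx : 0 < q.1 - p.1 := by grind
    have hx' : 0 < q'.1 - p.1 := by grind
    rw [WithTop.coe_le_coe, div_le_div_iff₀ hx hx'] at h
    linarith

lemma exists_ccwOrdered_perm (S : Finset Pt) (hgp : GenPos (S : Set Pt))
    (hconv : ∀ x ∈ S, x ∉ convexHull ℝ ((S : Set Pt) \ {x})) :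
    ∃ l : List Pt, l.Perm S.toList ∧ CcwOrdered l := by
  rcases S.eq_empty_or_nonempty with rfl | hne
  · exact ⟨[], by simp, fun i j k _ _ hk => absurd hk (by simp)⟩
  obtain ⟨p, hp, hmin⟩ := S.exists_min_image toLex hne
  have hlex : ∀ q ∈ S.erase p, toLex p < toLex q := fun q hq =>
    (hmin q (Finset.mem_of_mem_erase hq)).lt_of_ne
      (toLex.injective.ne (Finset.ne_of_mem_erase hq).symm)
  set rest := (S.erase p).toList.mergeSort fun q q' => decide (slopeFrom p q ≤ slopeFrom p q')
  have hperm : rest.Perm (S.erase p).toList := List.mergeSort_perm _ _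
  have hrest : ∀ q ∈ rest, q ∈ S.erase p := fun q hq => Finset.mem_toList.1 (hperm.subset hq)
  have hsorted : rest.Pairwise fun q q' => slopeFrom p q ≤ slopeFrom p q' := by
    simpa using List.pairwise_mergeSort (le := fun q q' => decide (slopeFrom p q ≤ slopeFrom p q'))
      (fun _ _ _ => by simpa using le_trans) (fun _ _ => by simpa using le_total _ _) _
  refine ⟨p :: rest, ?_, ccwOrdered_cons_of_convexPosition hgp hconv hp
    (fun q hq => Finset.mem_of_mem_erase (hrest q hq)) ?_⟩
  · conv_rhs => rw [← Finset.insert_erase hp]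
    exact (hperm.cons p).trans (Finset.toList_insert (Finset.notMem_erase p S)).symm
  · refine (hsorted.and (hperm.nodup_iff.2 (Finset.nodup_toList _))).imp_of_mem
      fun hq hq' ⟨hle, hne⟩ => ?_
    have hq := hrest _ hq
    have hq' := hrest _ hq'
    exact (ccw_nonneg_of_slopeFrom_le (hlex _ hq) (hlex _ hq') hle).lt_of_ne'
      (hgp.ccw_ne_zero hp (Finset.mem_of_mem_erase hq) (Finset.mem_of_mem_erase hq')
        (Finset.ne_of_mem_erase hq).symm (Finset.ne_of_mem_erase hq').symm hne)

/-- The `t`-th entry of the zig-zag `m, m + 1, m - 1, m + 2, m - 2, …` through `0, …, n - 1`,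
where `m = (n - 1) / 2`. -/
def zigzagIndex (n t : ℕ) : ℕ :=
  if t % 2 = 0 then (n - 1) / 2 - t / 2 else (n - 1) / 2 + (t + 1) / 2

section zigzagIndex

variable {n t : ℕ}

lemma zigzagIndex_lt (ht : t < n) : zigzagIndex n t < n := by
  unfold zigzagIndex; split_ifs <;> omega

lemma zigzagIndex_injOn {t' : ℕ} (ht : t < n) (ht' : t' < n)
    (h : zigzagIndex n t = zigzagIndex n t') : t = t' := by
  unfold zigzagIndex at h; split_ifs at h <;> omega

lemma exists_zigzagIndex_eq {a : ℕ} (ha : a < n) : ∃ t < n, zigzagIndex n t = a := by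
  unfold zigzagIndex
  by_cases h : a ≤ (n - 1) / 2
  · exact ⟨2 * ((n - 1) / 2 - a), by omega, by simp; omega⟩
  · exact ⟨2 * (a - (n - 1) / 2) - 1, by omega, by rw [if_neg (by omega)]; omega⟩

lemma zigzagIndex_add_succ (ht : t + 1 < n) :
    zigzagIndex n t + zigzagIndex n (t + 1) = 2 * ((n - 1) / 2) + (t + 1) % 2 := by
  unfold zigzagIndex; split_ifs <;> omega

lemma zigzagIndex_lt_min_or_max_lt {s : ℕ} (hts : t + 2 ≤ s) (hs : s < n) :
    zigzagIndex n s < min (zigzagIndex n t) (zigzagIndex n (t + 1)) ∨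
      max (zigzagIndex n t) (zigzagIndex n (t + 1)) < zigzagIndex n s := by
  unfold zigzagIndex; split_ifs <;> omega

end zigzagIndex

def zigzag (l : List Pt) : List Pt :=
  (List.range l.length).map fun t => l[zigzagIndex l.length t]!

section zigzag

variable {l : List Pt}

@[simp]
lemma length_zigzag : (zigzag l).length = l.length := by simp [zigzag]

lemma getElem!_zigzag {t : ℕ} (ht : t < l.length) :
    (zigzag l)[t]! = l[zigzagIndex l.length t]! := by
  rw [getElem!_pos _ t (by simpa using ht)]
  simp [zigzag]

lemma mem_zigzag {x : Pt} : x ∈ zigzag l ↔ x ∈ l := by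
  simp only [zigzag, List.mem_map, List.mem_range]
  constructor
  · rintro ⟨t, ht, rfl⟩
    have ha := zigzagIndex_lt ht
    rw [getElem!_pos l _ ha]
    exact l.getElem_mem ha
  · intro hx
    obtain ⟨a, ha, rfl⟩ := List.mem_iff_getElem.1 hx
    obtain ⟨t, ht, rfl⟩ := exists_zigzagIndex_eq ha
    exact ⟨t, ht, getElem!_pos l _ ha⟩

lemma List.Nodup.zigzag (hl : l.Nodup) : (zigzag l).Nodup := by
  refine List.Nodup.map_on (fun t ht t' ht' h => ?_) List.nodup_range
  rw [List.mem_range] at ht ht'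
  exact zigzagIndex_injOn ht ht' (hl.getElem!_inj (zigzagIndex_lt ht) (zigzagIndex_lt ht') h)

lemma CcwOrdered.zigzag_side (hl : CcwOrdered l) {t : ℕ} (ht : t + 1 < l.length) :
    ∃ a b, (a = (zigzag l)[t]! ∧ b = (zigzag l)[t + 1]! ∨
        a = (zigzag l)[t + 1]! ∧ b = (zigzag l)[t]!) ∧
      ∀ s, t + 2 ≤ s → s < l.length → 0 < ccw a b (zigzag l)[s]! := by
  have hne : zigzagIndex l.length t ≠ zigzagIndex l.length (t + 1) := fun h =>
    absurd (zigzagIndex_injOn (by omega) ht h) (by omega)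
  have hside : ∀ s, t + 2 ≤ s → s < l.length → 0 < ccw
      l[min (zigzagIndex l.length t) (zigzagIndex l.length (t + 1))]!
      l[max (zigzagIndex l.length t) (zigzagIndex l.length (t + 1))]! (zigzag l)[s]! :=
    fun s hts hs => by
      rw [getElem!_zigzag hs]
      exact hl.ccw_pos_of_lt_or_lt (by omega) (max_lt (zigzagIndex_lt (by omega))
        (zigzagIndex_lt ht)) (zigzagIndex_lt hs) (zigzagIndex_lt_min_or_max_lt hts hs)
  refine ⟨_, _, ?_, hside⟩
  rw [getElem!_zigzag (by omega), getElem!_zigzag ht]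
  rcases le_total (zigzagIndex l.length t) (zigzagIndex l.length (t + 1)) with h | h <;>
    simp [h]

lemma CcwOrdered.planeList_zigzag (hl : CcwOrdered l) : PlaneList (zigzag l) := by
  intro i j hij hj
  rw [length_zigzag] at hj
  obtain ⟨a, b, hab, hside⟩ := hl.zigzag_side (t := i) (by omega)
  rcases (show i + 1 ≤ j from hij).eq_or_lt with rfl | hlt
  · have hccw : ccw (zigzag l)[i]! (zigzag l)[i + 1]! (zigzag l)[i + 2]! ≠ 0 := by
      have := hside (i + 2) le_rfl hj
      rcases hab with ⟨rfl, rfl⟩ | ⟨rfl, rfl⟩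
      · exact this.ne'
      · rw [← neg_ne_zero, ← ccw_swap]; exact this.ne'
    rintro p ⟨hp, hp'⟩
    rw [eq_of_mem_segment_of_mem_segment hccw hp hp']
    simp
  · have hseg : segment ℝ (zigzag l)[i]! (zigzag l)[i + 1]! = segment ℝ a b := by
      rcases hab with ⟨rfl, rfl⟩ | ⟨rfl, rfl⟩
      · rfl
      · exact segment_symm ℝ _ _
    rw [hseg, Set.disjoint_iff_inter_eq_empty.1 (disjoint_segment_of_ccw_pos
      (hside j (by omega) (by omega)) (hside (j + 1) (by omega) hj))]
    exact Set.empty_subset _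

lemma CcwOrdered.planeSpanningPath_zigzag (hl : CcwOrdered l) (hnd : l.Nodup) {S : Set Pt}
    (hS : ∀ x, x ∈ l ↔ x ∈ S) : PlaneSpanningPath S (zigzag l) :=
  ⟨⟨hnd.zigzag, Set.ext fun x => mem_zigzag.trans (hS x)⟩, hl.planeList_zigzag⟩

end zigzag

lemma exists_of_mem_edgeSet {l : List Pt} {e : Set Pt} (he : e ∈ edgeSet l) :
    ∃ t, t + 1 < l.length ∧ e = {l[t]!, l[t + 1]!} := by
  obtain ⟨q, hq, rfl⟩ := he
  obtain ⟨t, ht, rfl⟩ := List.mem_iff_getElem.1 hq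
  simp only [List.length_zip, List.length_tail] at ht
  refine ⟨t, by omega, ?_⟩
  rw [List.getElem_zip, List.getElem_tail, getElem!_pos l t (by omega), getElem!_pos l (t + 1)]

lemma getElem!_rotate {l : List Pt} {a : ℕ} (c : ℕ) (ha : a < l.length) :
    (l.rotate c)[a]! = l[(a + c) % l.length]! := by
  rw [getElem!_pos _ a (by simpa using ha), List.getElem_rotate,
    getElem!_pos l _ (Nat.mod_lt _ (by omega))]

lemma exists_of_mem_edgeSet_zigzag_rotate {l : List Pt} {c : ℕ} {e : Set Pt}
    (he : e ∈ edgeSet (zigzag (l.rotate c))) :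
    ∃ a < l.length, ∃ b < l.length, ∃ δ < 2, e = {l[a]!, l[b]!} ∧
      a + b ≡ 2 * (c + (l.length - 1) / 2) + δ [MOD l.length] := by
  obtain ⟨t, ht, rfl⟩ := exists_of_mem_edgeSet he
  simp only [length_zigzag, List.length_rotate] at ht
  have hidx := zigzagIndex_add_succ ht
  refine ⟨(zigzagIndex l.length t + c) % l.length, Nat.mod_lt _ (by omega),
    (zigzagIndex l.length (t + 1) + c) % l.length, Nat.mod_lt _ (by omega),
    (t + 1) % 2, Nat.mod_lt _ two_pos, ?_, ?_⟩
  · rw [getElem!_zigzag (by simp; omega), getElem!_zigzag (by simpa using ht),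
      List.length_rotate, getElem!_rotate c (zigzagIndex_lt (by omega)),
      getElem!_rotate c (zigzagIndex_lt ht)]
  · refine ((Nat.mod_modEq _ _).add (Nat.mod_modEq _ _)).trans ?_
    rw [show zigzagIndex l.length t + c + (zigzagIndex l.length (t + 1) + c) =
      2 * (c + (l.length - 1) / 2) + (t + 1) % 2 by omega]

lemma edgeDisjoint_zigzag_rotate {l : List Pt} (hl : l.Nodup) {r r' : ℕ}
    (hr : 2 * r + 1 < l.length) (hr' : 2 * r' + 1 < l.length) (hrr' : r ≠ r') :
    EdgeDisjoint (zigzag (l.rotate r)) (zigzag (l.rotate r')) := by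
  intro e he he'
  obtain ⟨a, ha, b, hb, δ, hδ, rfl, hab⟩ := exists_of_mem_edgeSet_zigzag_rotate he
  obtain ⟨a', ha', b', hb', δ', hδ', he, hab'⟩ := exists_of_mem_edgeSet_zigzag_rotate he'
  have hsum : a + b = a' + b' := by
    rcases Set.pair_eq_pair_iff.1 he with ⟨h₁, h₂⟩ | ⟨h₁, h₂⟩
    · rw [hl.getElem!_inj ha ha' h₁, hl.getElem!_inj hb hb' h₂]
    · rw [hl.getElem!_inj ha hb' h₁, hl.getElem!_inj hb ha' h₂, add_comm]
  have hmod : 2 * r + δ ≡ 2 * r' + δ' [MOD l.length] := by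
    refine Nat.ModEq.add_right_cancel' (2 * ((l.length - 1) / 2)) ?_
    convert hab.symm.trans (hsum ▸ hab') using 1 <;> ring
  have := hmod.eq_of_lt_of_lt (by omega) (by omega)
  omega

theorem stmt_18_general (S : Finset Pt) (hgp : GenPos (S : Set Pt))
    (hconv : ∀ x ∈ S, x ∉ convexHull ℝ ((S : Set Pt) \ {x})) :
    ∃ f : Fin (S.card / 2) → List Pt,
      (∀ i, PlaneSpanningPath (S : Set Pt) (f i)) ∧
      ∀ i j, i ≠ j → EdgeDisjoint (f i) (f j) := by
  obtain ⟨l, hperm, hl⟩ := exists_ccwOrdered_perm S hgp hconv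
  have hlen : l.length = S.card := hperm.length_eq.trans S.length_toList
  have hnd : l.Nodup := hperm.nodup_iff.2 S.nodup_toList
  refine ⟨fun r => zigzag (l.rotate r), fun r => ?_, fun r r' hrr' => ?_⟩
  · exact (hl.rotate r).planeSpanningPath_zigzag (List.nodup_rotate.2 hnd)
      fun x => List.mem_rotate.trans (hperm.mem_iff.trans Finset.mem_toList)
  · exact edgeDisjoint_zigzag_rotate hnd (by omega) (by omega) (Fin.val_injective.ne hrr')

theorem stmt_18 (S : Finset Pt) (h2 : 2 ≤ S.card) (hgp : GenPos (S : Set Pt))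
    (hconv : ∀ x ∈ S, x ∉ convexHull ℝ ((S : Set Pt) \ {x})) :
    ∃ f : Fin (S.card / 2) → List Pt,
      (∀ i, PlaneSpanningPath (S : Set Pt) (f i)) ∧
      ∀ i j, i ≠ j → EdgeDisjoint (f i) (f j) :=
  stmt_18_general S hgp hconv
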